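/- arXiv:1004.2478 — 2 statements merged into one kernel-verified Lean document; each statement's English description precedes it below -/
import Mathlib

section
/- Let G be a simple graph on n vertices with m edges and let k = 2(n²−n) − m. Then G has an orientation of diameter at most 2 if and only if G has an orientation whose Wiener index is at most k. -/
/-- `reachIn D k x y` : there is a directed walk of length exactly `k` from `x` to `y`
in the directed graph given by the relation `D`. -/
def reachIn {V : Type*} (D : V → V → Prop) : ℕ → V → V → Prop
  | 0, x, y => x = y
  | n + 1, x, y => ∃ z, D x z ∧ reachIn D n z y

/-- Directed distance: length of a shortest directed path (`⊤` if none exists). -/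
noncomputable def ddist {V : Type*} (D : V → V → Prop) (x y : V) : ℕ∞ :=
  sInf {n : ℕ∞ | ∃ k : ℕ, (k : ℕ∞) = n ∧ reachIn D k x y}

/-- Directed diameter: sup of directed distances over ordered pairs of distinct vertices. -/
noncomputable def ddiam {V : Type*} (D : V → V → Prop) : ℕ∞ :=
  sSup {n : ℕ∞ | ∃ x y : V, x ≠ y ∧ ddist D x y = n}

open Classical in
/-- Wiener index of a directed graph: sum of directed distances over ordered pairs
of distinct vertices. -/
noncomputable def wiener {V : Type*} [Fintype V] (D : V → V → Prop) : ℕ∞ :=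
  ∑ x : V, ∑ y : V, if x ≠ y then ddist D x y else 0

/-- `D` is an orientation of the simple graph `G`: every arc of `D` comes from an edge
of `G`, and each edge of `G` gets exactly one of its two directions. -/
def IsOrientation {V : Type*} (G : SimpleGraph V) (D : V → V → Prop) : Prop :=
  ∀ u v : V, (D u v → G.Adj u v) ∧ (G.Adj u v → (D u v ↔ ¬ D v u))

/-!
In any orientation `D` of `G`, distinct vertices are at distance at least `1`, and at least `2`
unless `D` has an arc between them. Since each of the `m` edges yields exactly one arc, these
lower bounds sum to `2(n² − n) − m` over ordered pairs, so the Wiener index of `D` is at most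
that number iff every distance equals its lower bound, i.e. iff `D` has diameter at most `2`.
-/
theorem ENat.sum_le_sum_iff_of_le {ι : Type*} {s : Finset ι} {f g : ι → ℕ∞}
    (hf : ∀ i ∈ s, f i ≠ ⊤) (hfg : ∀ i ∈ s, f i ≤ g i) :
    ∑ i ∈ s, g i ≤ ∑ i ∈ s, f i ↔ ∀ i ∈ s, g i ≤ f i := by
  classical
  refine ⟨fun hsum i hi => ?_, Finset.sum_le_sum⟩
  by_contra hlt
  have hsucc : f i + 1 ≤ g i := (ENat.add_one_le_iff (hf i hi)).2 (not_le.mp hlt)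
  have hsum_succ : ∑ j ∈ s, f j + 1 ≤ ∑ j ∈ s, f j :=
    calc ∑ j ∈ s, f j + 1 = (f i + 1) + ∑ j ∈ s.erase i, f j := by
          rw [← Finset.add_sum_erase s _ hi, add_right_comm]
      _ ≤ g i + ∑ j ∈ s.erase i, g j :=
          add_le_add hsucc (Finset.sum_le_sum fun j hj => hfg j (Finset.mem_of_mem_erase hj))
      _ = ∑ j ∈ s, g j := Finset.add_sum_erase s _ hi
      _ ≤ _ := hsum
  exact lt_irrefl _ ((ENat.add_one_le_iff (WithTop.sum_ne_top.2 hf)).mp hsum_succ)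

section Distance

variable {V : Type*} {D : V → V → Prop} {x y : V}

theorem ddist_le_one_of_arc (h : D x y) : ddist D x y ≤ 1 :=
  sInf_le ⟨1, rfl, y, h, rfl⟩

theorem one_le_ddist_of_ne (h : x ≠ y) : 1 ≤ ddist D x y := by
  refine le_sInf ?_
  rintro _ ⟨_ | k, rfl, hk⟩
  · exact absurd hk h
  · exact_mod_cast k.succ_pos

theorem two_le_ddist_of_not_arc (h : x ≠ y) (hxy : ¬ D x y) : 2 ≤ ddist D x y := by
  refine le_sInf ?_
  rintro _ ⟨_ | _ | k, rfl, hk⟩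
  · exact absurd hk h
  · obtain ⟨z, hz, rfl⟩ := hk
    exact absurd hz hxy
  · exact_mod_cast Nat.le_add_left 2 k

theorem ddiam_le_iff {n : ℕ∞} : ddiam D ≤ n ↔ ∀ x y, x ≠ y → ddist D x y ≤ n := by
  simp only [ddiam, sSup_le_iff, Set.mem_ofPred_eq, forall_exists_index, and_imp]
  exact ⟨fun h x y hxy => h _ x y hxy rfl, fun h _ x y hxy hn => hn ▸ h x y hxy⟩

-- The distance from `x` to `y` in an orientation of diameter at most `2`.
open Classical in
noncomputable def arcDistBound (D : V → V → Prop) (x y : V) : ℕ :=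
  if x = y then 0 else if D x y then 1 else 2

theorem arcDistBound_le_ddist (h : x ≠ y) : (arcDistBound D x y : ℕ∞) ≤ ddist D x y := by
  by_cases hxy : D x y
  · simpa [arcDistBound, h, hxy] using one_le_ddist_of_ne h
  · simpa [arcDistBound, h, hxy] using two_le_ddist_of_not_arc h hxy

theorem ddist_le_two_iff_le_arcDistBound (h : x ≠ y) :
    ddist D x y ≤ 2 ↔ ddist D x y ≤ arcDistBound D x y := by
  by_cases hxy : D x y
  · simp only [arcDistBound, h, hxy, if_false, if_true, Nat.cast_one]
    exact ⟨fun _ => ddist_le_one_of_arc hxy, fun h1 => h1.trans one_le_two⟩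
  · simp [arcDistBound, h, hxy]

open Classical in
theorem arcDistBound_add_ite (hirr : ∀ v, ¬ D v v) (x y : V) :
    arcDistBound D x y + (if D x y then 1 else 0) = if x = y then 0 else 2 := by
  by_cases h : x = y
  · subst h; simp [arcDistBound, hirr]
  · by_cases hxy : D x y <;> simp [arcDistBound, h, hxy]

open Classical in
theorem wiener_le_sum_arcDistBound_iff [Fintype V] :
    wiener D ≤ ∑ x, ∑ y, (arcDistBound D x y : ℕ∞) ↔
      ∀ x y, x ≠ y → ddist D x y ≤ arcDistBound D x y := by
  have hle (x y : V) : (arcDistBound D x y : ℕ∞) ≤ if x ≠ y then ddist D x y else 0 := by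
    by_cases h : x = y
    · simp [arcDistBound, h]
    · simpa [h] using arcDistBound_le_ddist h
  have hrow (x : V) :
      ∑ y, (if x ≠ y then ddist D x y else 0) ≤ ∑ y, (arcDistBound D x y : ℕ∞) ↔
        ∀ y, x ≠ y → ddist D x y ≤ arcDistBound D x y := by
    rw [ENat.sum_le_sum_iff_of_le (fun _ _ => ENat.natCast_ne_top _) fun y _ => hle x y]
    refine forall_congr' fun y => ?_
    by_cases h : x = y <;> simp [h, arcDistBound]
  have hrow_le (x : V) :
      ∑ y, (arcDistBound D x y : ℕ∞) ≤ ∑ y, (if x ≠ y then ddist D x y else 0) :=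
    Finset.sum_le_sum fun y _ => hle x y
  refine (ENat.sum_le_sum_iff_of_le
    (fun _ _ => WithTop.sum_ne_top.2 fun _ _ => ENat.natCast_ne_top _) fun x _ => hrow_le x).trans ?_
  exact ⟨fun h x => (hrow x).1 (h x (Finset.mem_univ x)), fun h x _ => (hrow x).2 (h x)⟩

end Distance

namespace IsOrientation

variable {V : Type*} {G : SimpleGraph V} {D : V → V → Prop}

theorem irrefl (hD : IsOrientation G D) (v : V) : ¬ D v v :=
  fun h => G.irrefl ((hD v v).1 h)

theorem not_arc_swap (hD : IsOrientation G D) {u v : V} (h : D u v) : ¬ D v u :=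
  ((hD u v).2 ((hD u v).1 h)).1 h

theorem arc_or_arc_swap (hD : IsOrientation G D) {u v : V} (h : G.Adj u v) : D u v ∨ D v u := by
  by_cases huv : D u v
  · exact .inl huv
  · exact .inr (((hD v u).2 h.symm).2 huv)

theorem card_arcs (hD : IsOrientation G D) :
    Nat.card {p : V × V // D p.1 p.2} = Nat.card G.edgeSet := by
  refine Nat.card_congr <| Equiv.ofBijective (fun p => ⟨s(p.1.1, p.1.2), (hD _ _).1 p.2⟩) ⟨?_, ?_⟩
  · rintro ⟨⟨x, y⟩, hxy⟩ ⟨⟨x', y'⟩, hxy'⟩ h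
    obtain ⟨rfl, rfl⟩ | ⟨rfl, rfl⟩ := Sym2.eq_iff.1 (congrArg Subtype.val h)
    · rfl
    · exact absurd hxy' (hD.not_arc_swap hxy)
  · rintro ⟨e, he⟩
    induction e using Sym2.ind with
    | _ u v =>
      rcases hD.arc_or_arc_swap he with huv | hvu
      · exact ⟨⟨(u, v), huv⟩, rfl⟩
      · exact ⟨⟨(v, u), hvu⟩, Subtype.ext Sym2.eq_swap⟩

theorem sum_arcDistBound [Fintype V] (hD : IsOrientation G D) :
    ∑ x, ∑ y, arcDistBound D x y = 2 * (Fintype.card V ^ 2 - Fintype.card V) - Nat.card G.edgeSet := by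
  classical
  have hcard : ∑ x, ∑ y, (if D x y then 1 else 0 : ℕ) = Nat.card G.edgeSet := by
    rw [← hD.card_arcs, Nat.card_eq_fintype_card, Fintype.card_subtype, ← Fintype.sum_prod_type']
    simp
  have hoff : ∑ x : V, ∑ y : V, (if x = y then 0 else 2 : ℕ) =
      2 * (Fintype.card V ^ 2 - Fintype.card V) := by
    simp only [Finset.sum_ite, Finset.sum_const_zero, zero_add, Finset.sum_const, smul_eq_mul,
      Finset.filter_ne, Finset.mem_univ, Finset.card_erase_of_mem, Finset.card_univ]
    rw [sq, ← Nat.mul_sub_one]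
    ring
  refine eq_tsub_of_add_eq ?_
  rw [← hcard, ← hoff, ← Finset.sum_add_distrib]
  refine Finset.sum_congr rfl fun x _ => ?_
  rw [← Finset.sum_add_distrib]
  exact Finset.sum_congr rfl fun y _ => arcDistBound_add_ite hD.irrefl x y

theorem ddiam_le_two_iff_wiener_le [Fintype V] (hD : IsOrientation G D) :
    ddiam D ≤ 2 ↔
      wiener D ≤ ((2 * (Fintype.card V ^ 2 - Fintype.card V) - Nat.card G.edgeSet : ℕ) : ℕ∞) := by
  rw [← hD.sum_arcDistBound]
  simp only [Nat.cast_sum, wiener_le_sum_arcDistBound_iff, ddiam_le_iff]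
  exact forall₂_congr fun x y => imp_congr_right ddist_le_two_iff_le_arcDistBound

end IsOrientation

/-- With `k = 2(n² − n) − m`, a simple graph has an orientation of diameter at most `2`
iff it has an orientation of Wiener index at most `k`. -/
theorem orientation_diam_two_iff_wiener {V : Type*} [Fintype V] (G : SimpleGraph V) :
    (∃ D : V → V → Prop, IsOrientation G D ∧ ddiam D ≤ 2) ↔
      (∃ D : V → V → Prop, IsOrientation G D ∧
        wiener D ≤ ((2 * ((Fintype.card V) ^ 2 - Fintype.card V) - Nat.card G.edgeSet : ℕ) : ℕ∞)) :=
  exists_congr fun _ => and_congr_right IsOrientation.ddiam_le_two_iff_wiener_le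
end

section
/- A connected graph G has an orientation of finite diameter if and only if G is 2-edge-connected (bridgeless). (Robbins' theorem.) -/
/-!
If the edge `uv` is oriented `u → v`, a directed path from `v` back to `u` never uses the arc
`u → v` (it could stop at `u` instead), so `uv` still joins `v` to `u` after its deletion.

Conversely, grow a vertex set `S` together with an orientation of some edges inside `S` that is
strongly connected on `S`, starting from a single vertex. If `S` is not everything, connectivity
gives an edge `ab` leaving `S`; as `ab` is not a bridge, a path from `b` returns to `S` without
using `ab`. Orienting `a → b` and then the path up to its first return to `S` adds an ear and keeps
strong connectivity. A maximal `S` is therefore the whole vertex set, and the edges that are still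
unoriented can be oriented arbitrarily.
-/

open Relation SimpleGraph

section

variable {V : Type*}

theorem reflTransGen_iff_exists_reachIn {D : V → V → Prop} {x y : V} :
    ReflTransGen D x y ↔ ∃ k, reachIn D k x y := by
  constructor
  · intro h
    induction h using ReflTransGen.head_induction_on with
    | refl => exact ⟨0, rfl⟩
    | head hxz _ ih =>
      obtain ⟨k, hk⟩ := ih
      exact ⟨k + 1, _, hxz, hk⟩
  · rintro ⟨k, hk⟩
    induction k generalizing x with
    | zero => exact hk ▸ ReflTransGen.refl
    | succ k ih =>
      obtain ⟨z, hxz, hz⟩ := hk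
      exact ReflTransGen.head hxz (ih hz)

theorem ddist_lt_top_iff {D : V → V → Prop} {x y : V} :
    ddist D x y < ⊤ ↔ ReflTransGen D x y := by
  rw [reflTransGen_iff_exists_reachIn]
  constructor
  · intro h
    obtain ⟨_, ⟨k, -, hk⟩, -⟩ := sInf_lt_iff.1 h
    exact ⟨k, hk⟩
  · rintro ⟨k, hk⟩
    refine lt_of_le_of_lt (sInf_le ?_) (ENat.natCast_lt_top k)
    exact ⟨k, rfl, hk⟩

theorem ddist_le_ddiam {D : V → V → Prop} {x y : V} (hxy : x ≠ y) : ddist D x y ≤ ddiam D :=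
  le_sSup ⟨x, y, hxy, rfl⟩

theorem ddiam_lt_top_iff [Finite V] {D : V → V → Prop} :
    ddiam D < ⊤ ↔ ∀ x y, ReflTransGen D x y := by
  have := Fintype.ofFinite V
  constructor
  · intro h x y
    rcases eq_or_ne x y with rfl | hxy
    · exact ReflTransGen.refl
    · exact ddist_lt_top_iff.1 ((ddist_le_ddiam hxy).trans_lt h)
  · intro h
    calc ddiam D ≤ Finset.univ.sup fun p : V × V => ddist D p.1 p.2 := sSup_le <| by
          rintro _ ⟨x, y, -, rfl⟩
          exact Finset.le_sup (f := fun p : V × V => ddist D p.1 p.2) (Finset.mem_univ (x, y))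
      _ < ⊤ := (Finset.sup_lt_iff bot_lt_top).2 fun p _ => ddist_lt_top_iff.2 (h p.1 p.2)

namespace SimpleGraph

variable {G : SimpleGraph V}

theorem not_isBridge_of_reflTransGen {D : V → V → Prop} (hadj : ∀ x y, D x y → G.Adj x y)
    {u v : V} (hvu : ¬ D v u) (h : ReflTransGen D v u) : ¬ G.IsBridge s(u, v) := by
  rw [isBridge_iff, not_not]
  suffices ∀ x, ReflTransGen D x u → (G.deleteEdges {s(u, v)}).Reachable x u from (this v h).symm
  intro x hx
  induction hx using ReflTransGen.head_induction_on with
  | refl => rfl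
  | @head x z hxz _ ih =>
    rcases eq_or_ne x u with rfl | hxu
    · rfl
    have hne : s(x, z) ≠ s(u, v) := by
      rw [Ne, Sym2.eq_iff]
      rintro (⟨rfl, -⟩ | ⟨rfl, rfl⟩)
      exacts [hxu rfl, hvu hxz]
    exact Adj.reachable (deleteEdges_adj.2 ⟨hadj x z hxz, hne⟩) |>.trans ih

theorem _root_.IsOrientation.not_isBridge {D : V → V → Prop} (hD : IsOrientation G D)
    (hreach : ∀ x y, ReflTransGen D x y) {e : Sym2 V} (he : e ∈ G.edgeSet) : ¬ G.IsBridge e := by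
  induction e using Sym2.ind with
  | _ u v =>
  have hadj : ∀ x y, D x y → G.Adj x y := fun x y => (hD x y).1
  by_cases hvu : D v u
  · rw [Sym2.eq_swap]
    exact not_isBridge_of_reflTransGen hadj (((hD v u).2 (G.adj_symm he)).1 hvu) (hreach u v)
  · exact not_isBridge_of_reflTransGen hadj hvu (hreach v u)

theorem exists_isOrientation_le {D : V → V → Prop} (hadj : ∀ x y, D x y → G.Adj x y)
    (hasymm : ∀ x y, D x y → ¬ D y x) : ∃ D', IsOrientation G D' ∧ D ≤ D' := by
  classical
  let : LinearOrder V := linearOrderOfSTO WellOrderingRel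
  refine ⟨fun x y => G.Adj x y ∧ (D x y ∨ (¬ D y x ∧ x < y)),
    fun x y => ⟨And.left, fun hxy => ?_⟩, fun x y h => ⟨hadj x y h, Or.inl h⟩⟩
  have := hasymm x y
  have := hasymm y x
  have := lt_or_gt_of_ne hxy.ne
  have := @lt_asymm _ _ x y
  have := hxy.symm
  tauto

structure IsStrongPartialOrientation (G : SimpleGraph V) (S : Set V) (D : V → V → Prop) :
    Prop where
  adj : ∀ x y, D x y → G.Adj x y
  asymm : ∀ x y, D x y → ¬ D y x
  mem : ∀ x y, D x y → x ∈ S ∧ y ∈ S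
  reach : ∀ x ∈ S, ∀ y ∈ S, ReflTransGen D x y

theorem isStrongPartialOrientation_singleton (v : V) :
    IsStrongPartialOrientation G {v} fun _ _ => False where
  adj _ _ := False.elim
  asymm _ _ := False.elim
  mem _ _ := False.elim
  reach x hx y hy := by rw [hx, hy]

namespace Walk

theorem IsTrail.symm_notMem_darts {u v : V} {p : G.Walk u v} (hp : p.IsTrail) {d : G.Dart}
    (hd : d ∈ p.darts) : d.symm ∉ p.darts := fun hd' =>
  d.symm_ne (List.inj_on_of_nodup_map hp.edges_nodup hd' hd d.edge_symm)

def DartRel {u v : V} (p : G.Walk u v) (x y : V) : Prop :=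
  ∃ d ∈ p.darts, d.fst = x ∧ d.snd = y

theorem reflTransGen_dartRel_of_mem_support {u v x : V} (p : G.Walk u v) (hx : x ∈ p.support) :
    ReflTransGen p.DartRel u x ∧ ReflTransGen p.DartRel x v := by
  induction p generalizing x with
  | nil =>
    rw [support_nil, List.mem_singleton] at hx
    subst hx
    exact ⟨.refl, .refl⟩
  | cons h p ih =>
    have hle : p.DartRel ≤ (cons h p).DartRel := fun _ _ ⟨d, hd, hy, hz⟩ =>
      ⟨d, List.mem_cons_of_mem _ hd, hy, hz⟩
    have hmono := ReflTransGen.mono hle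
    have hfirst : (cons h p).DartRel _ _ := ⟨_, List.mem_cons_self, rfl, rfl⟩
    rw [support_cons, List.mem_cons] at hx
    rcases hx with rfl | hx
    · exact ⟨.refl, .head hfirst (hmono _ _ (ih p.start_mem_support).2)⟩
    · exact ⟨.head hfirst (hmono _ _ (ih hx).1), hmono _ _ (ih hx).2⟩

theorem exists_darts_fst_notMem {S : Set V} {u v : V} (p : G.Walk u v) (hu : u ∉ S)
    (hv : v ∈ S) :
    ∃ c ∈ S, ∃ q : G.Walk u c, q.edges.Sublist p.edges ∧ ∀ d ∈ q.darts, d.fst ∉ S := by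
  induction p with
  | nil => exact absurd hv hu
  | @cons u w v h p ih =>
    by_cases hw : w ∈ S
    · refine ⟨w, hw, cons h nil, ?_, ?_⟩
      · simp
      · simpa using hu
    · obtain ⟨c, hc, q, hqp, hq⟩ := ih hw hv
      refine ⟨c, hc, cons h q, hqp.cons_cons _, ?_⟩
      rw [darts_cons, List.forall_mem_cons]
      exact ⟨hu, hq⟩

end Walk

theorem exists_ear {S : Set V} {a b : V} (ha : a ∈ S) (hb : b ∉ S) (hab : G.Adj a b)
    (hbr : ¬ G.IsBridge s(a, b)) : ∃ c ∈ S, ∃ W : G.Walk a c,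
      W.IsTrail ∧ b ∈ W.support ∧ ∀ d ∈ W.darts, d.fst ∉ S ∨ d.snd ∉ S := by
  classical
  rw [isBridge_iff_forall_walk_mem_edges, not_forall] at hbr
  obtain ⟨p, hp⟩ := hbr
  obtain ⟨c, hc, q, hqp, hq⟩ := p.reverse.bypass.exists_darts_fst_notMem hb ha
  have hq_sub : q.edges ⊆ p.edges := fun e he => by
    simpa using p.reverse.edges_bypass_subset_edges (hqp.subset he)
  refine ⟨c, hc, .cons hab q, ?_, by simp, ?_⟩
  · rw [Walk.isTrail_cons, Walk.isTrail_def]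
    exact ⟨hqp.nodup p.reverse.bypass_isPath.isTrail.edges_nodup, fun h => hp (hq_sub h)⟩
  · rw [Walk.darts_cons, List.forall_mem_cons]
    exact ⟨Or.inr hb, fun d hd => Or.inl (hq d hd)⟩

theorem IsStrongPartialOrientation.addEar {S : Set V} {D : V → V → Prop}
    (h : IsStrongPartialOrientation G S D) {a c : V} {W : G.Walk a c} (hW : W.IsTrail)
    (ha : a ∈ S) (hc : c ∈ S) (hout : ∀ d ∈ W.darts, d.fst ∉ S ∨ d.snd ∉ S) :
    IsStrongPartialOrientation G (S ∪ {x | x ∈ W.support}) (D ⊔ W.DartRel) where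
  adj := by
    rintro x y (hxy | ⟨d, -, rfl, rfl⟩)
    exacts [h.adj x y hxy, d.adj]
  asymm := by
    -- a new arc has an endpoint outside `S`, an old one does not; as `W` is a trail, no new arc
    -- reverses another
    have hmixed : ∀ x y, D x y → ∀ d ∈ W.darts, d.fst = y → d.snd = x → False := by
      rintro x y hxy d hd rfl rfl
      exact (hout d hd).elim (· (h.mem _ _ hxy).2) (· (h.mem _ _ hxy).1)
    rintro x y (hxy | ⟨d, hd, rfl, rfl⟩) (hyx | ⟨d', hd', hd'x, hd'y⟩)
    · exact h.asymm x y hxy hyx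
    · exact hmixed x y hxy d' hd' hd'x hd'y
    · exact hmixed _ _ hyx d hd rfl rfl
    · obtain rfl : d' = d.symm := Dart.ext _ _ (Prod.ext hd'x hd'y)
      exact hW.symm_notMem_darts hd hd'
  mem := by
    rintro x y (hxy | ⟨d, hd, rfl, rfl⟩)
    · exact (h.mem x y hxy).imp Or.inl Or.inl
    · exact ⟨Or.inr (W.dart_fst_mem_support_of_mem_darts hd),
        Or.inr (W.dart_snd_mem_support_of_mem_darts hd)⟩
  reach := by
    have hear : ∀ x ∈ W.support,
        ReflTransGen (D ⊔ W.DartRel) a x ∧ ReflTransGen (D ⊔ W.DartRel) x c := fun x hx =>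
      (W.reflTransGen_dartRel_of_mem_support hx).imp
        (ReflTransGen.mono le_sup_right _ _) (ReflTransGen.mono le_sup_right _ _)
    have hS : ∀ x ∈ S, ∀ y ∈ S, ReflTransGen (D ⊔ W.DartRel) x y := fun x hx y hy =>
      ReflTransGen.mono le_sup_left _ _ (h.reach x hx y hy)
    rintro x (hx | hx) y (hy | hy)
    · exact hS x hx y hy
    · exact (hS x hx a ha).trans (hear y hy).1
    · exact (hear x hx).2.trans (hS c hc y hy)
    · exact (hear x hx).2.trans ((hS c hc a ha).trans (hear y hy).1)

theorem Connected.exists_isStrongPartialOrientation_univ [Finite V] (hconn : G.Connected)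
    (hbr : ∀ e ∈ G.edgeSet, ¬ G.IsBridge e) : ∃ D, IsStrongPartialOrientation G Set.univ D := by
  obtain ⟨v⟩ := hconn.nonempty
  obtain ⟨S, ⟨hvS, D, hD⟩, hmax⟩ :=
    (Set.toFinite {S : Set V | v ∈ S ∧ ∃ D, IsStrongPartialOrientation G S D}).exists_maximal
      ⟨{v}, rfl, _, isStrongPartialOrientation_singleton v⟩
  suffices S = Set.univ from this ▸ ⟨D, hD⟩
  refine Set.eq_univ_of_forall fun y => by_contra fun hy => ?_
  obtain ⟨d, -, ha, hb⟩ := (hconn.preconnected v y).some.exists_boundary_dart S hvS hy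
  obtain ⟨c, hc, W, hW, hbW, hout⟩ := exists_ear ha hb d.adj (hbr _ d.edge_mem)
  exact hb (hmax ⟨Or.inl hvS, _, hD.addEar hW ha hc hout⟩ Set.subset_union_left (Or.inr hbW))

end SimpleGraph

end

/-- Robbins' theorem: a connected graph has an orientation of finite diameter iff it is
bridgeless. -/
theorem robbins {V : Type*} [Fintype V] (G : SimpleGraph V) (hconn : G.Connected) :
    (∃ D : V → V → Prop, IsOrientation G D ∧ ddiam D < ⊤) ↔
      ∀ e ∈ G.edgeSet, ¬ G.IsBridge e := by
  constructor
  · rintro ⟨D, hD, hdiam⟩ e he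
    exact hD.not_isBridge (ddiam_lt_top_iff.1 hdiam) he
  · intro hbr
    obtain ⟨D, hD⟩ := hconn.exists_isStrongPartialOrientation_univ hbr
    obtain ⟨D', hD', hle⟩ := exists_isOrientation_le hD.adj hD.asymm
    exact ⟨D', hD', ddiam_lt_top_iff.2 fun x y =>
      ReflTransGen.mono hle x y (hD.reach x trivial y trivial)⟩
end
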